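/- Given nonparallel e, ē ∈ S² with λ := e·ē, and s, t ∈ [−1,1] satisfying s² + t² − 2λst + λ² − 1 < 0, there exists p ∈ S² with p·e = s and p·ē = t. -/

import Mathlib

/-!
Solve for the point in the plane of `e` and `ē` first: the Gram matrix of `e, ē` is invertible
since `|λ| < 1`, so some `q = α e + β ē` has `q·e = s`, `q·ē = t`, and then
`‖q‖² = (s² + t² - 2λst)/(1 - λ²)`, which is `< 1` exactly by the hypothesis on `s, t`.
Adding `√(1 - ‖q‖²)` times a unit normal of that plane lifts `q` to the sphere without changing
its inner products with `e` and `ē`.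
-/

open Module Submodule RealInnerProductSpace

theorem Submodule.orthogonal_span_pair_ne_bot {𝕜 F : Type*} [RCLike 𝕜] [NormedAddCommGroup F]
    [InnerProductSpace 𝕜 F] [FiniteDimensional 𝕜 F] (hF : 2 < finrank 𝕜 F) (u v : F) :
    (span 𝕜 {u, v})ᗮ ≠ ⊥ := by
  classical
  rw [Ne, orthogonal_eq_bot_iff]
  intro htop
  have hle : finrank 𝕜 (span 𝕜 (({u, v} : Finset F) : Set F)) ≤ 2 :=
    (finrank_span_finset_le_card _).trans Finset.card_le_two
  rw [Finset.coe_pair, htop, finrank_top] at hle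
  omega

section

variable {E : Type*} [NormedAddCommGroup E] [InnerProductSpace ℝ E]

theorem exists_mem_span_pair_inner_eq {e ē : E} {lam : ℝ} (he : ‖e‖ = 1) (hē : ‖ē‖ = 1)
    (heē : ⟪e, ē⟫ = lam) (hlam : lam ^ 2 ≠ 1) (s t : ℝ) :
    ∃ q ∈ span ℝ {e, ē}, ⟪q, e⟫ = s ∧ ⟪q, ē⟫ = t ∧
      ‖q‖ ^ 2 = (s ^ 2 + t ^ 2 - 2 * lam * s * t) / (1 - lam ^ 2) := by
  have hd : 1 - lam ^ 2 ≠ 0 := sub_ne_zero.mpr (Ne.symm hlam)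
  set α := (s - lam * t) / (1 - lam ^ 2)
  set β := (t - lam * s) / (1 - lam ^ 2)
  set q := α • e + β • ē with hq
  have hqe : ⟪q, e⟫ = s := by
    simp only [hq, inner_add_left, real_inner_smul_left, real_inner_self_eq_norm_sq, he,
      real_inner_comm e ē, heē, α, β]
    field_simp
    ring
  have hqē : ⟪q, ē⟫ = t := by
    simp only [hq, inner_add_left, real_inner_smul_left, real_inner_self_eq_norm_sq, hē, heē, α, β]
    field_simp
    ring
  refine ⟨q, add_mem (smul_mem _ _ (subset_span (by simp))) (smul_mem _ _ (subset_span (by simp))),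
    hqe, hqē, ?_⟩
  calc ‖q‖ ^ 2 = ⟪q, α • e + β • ē⟫ := (real_inner_self_eq_norm_sq q).symm
    _ = α * s + β * t := by
      rw [inner_add_right, real_inner_smul_right, real_inner_smul_right, hqe, hqē]
    _ = _ := by simp only [α, β]; field_simp; ring

theorem exists_norm_eq_one_inner_eq_of_mem {K : Submodule ℝ E} (hK : Kᗮ ≠ ⊥) {q : E} (hqK : q ∈ K)
    (hq : ‖q‖ ≤ 1) : ∃ p : E, ‖p‖ = 1 ∧ ∀ u ∈ K, ⟪p, u⟫ = ⟪q, u⟫ := by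
  have : Nontrivial Kᗮ := nontrivial_iff_ne_bot.mpr hK
  obtain ⟨w, hw⟩ := exists_norm_eq Kᗮ zero_le_one
  set c := √(1 - ‖q‖ ^ 2)
  have hc : c ^ 2 = 1 - ‖q‖ ^ 2 := Real.sq_sqrt (by nlinarith [norm_nonneg q])
  refine ⟨q + c • (w : E), ?_, fun u hu => ?_⟩
  · have hpyth := norm_add_sq_eq_norm_sq_add_norm_sq_real
      (by rw [real_inner_smul_right, inner_right_of_mem_orthogonal hqK w.2, mul_zero] :
        ⟪q, c • (w : E)⟫ = 0)
    have hsq : ‖q + c • (w : E)‖ ^ 2 = 1 := by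
      rw [sq, hpyth, norm_smul, norm_coe, hw, mul_one, Real.norm_eq_abs, abs_mul_abs_self, ← sq,
        ← sq, hc, add_sub_cancel]
    exact (pow_eq_one_iff_of_nonneg (norm_nonneg _) two_ne_zero).mp hsq
  · rw [inner_add_left, real_inner_smul_left, inner_left_of_mem_orthogonal hu w.2, mul_zero,
      add_zero]

end

theorem exists_point_with_dots (e ebar : EuclideanSpace ℝ (Fin 3))
    (he : ‖e‖ = 1) (hebar : ‖ebar‖ = 1) (lam s t : ℝ) (hlam : lam = inner ℝ e ebar)
    (hlam1 : |lam| < 1)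
    (hineq : s ^ 2 + t ^ 2 - 2 * lam * s * t + lam ^ 2 - 1 < 0) :
    ∃ p : EuclideanSpace ℝ (Fin 3), ‖p‖ = 1 ∧ (inner ℝ p e : ℝ) = s ∧ (inner ℝ p ebar : ℝ) = t := by
  have hlam_sq : lam ^ 2 < 1 := (sq_lt_one_iff_abs_lt_one lam).mpr hlam1
  obtain ⟨q, hqK, hqe, hqē, hq⟩ :=
    exists_mem_span_pair_inner_eq he hebar hlam.symm hlam_sq.ne s t
  have hq1 : ‖q‖ ≤ 1 := (sq_le_one_iff₀ (norm_nonneg q)).mp <| by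
    rw [hq, div_le_one (sub_pos.mpr hlam_sq)]
    linarith
  have hK := orthogonal_span_pair_ne_bot
    (by simp : 2 < finrank ℝ (EuclideanSpace ℝ (Fin 3))) e ebar
  obtain ⟨p, hp, hpK⟩ := exists_norm_eq_one_inner_eq_of_mem hK hqK hq1
  exact ⟨p, hp, (hpK e (subset_span (by simp))).trans hqe,
    (hpK ebar (subset_span (by simp))).trans hqē⟩
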